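/- arXiv:2409.12395 — 9 statements merged into one kernel-verified Lean document; each statement's English description precedes it below -/
import Mathlib

section
/- Let a, b be complex numbers with Re(a·conj(b)) ≥ 0, and let u, u', v, v' be positive real numbers with u ≤ u' and v ≤ v'. Then |a·u + b·v| ≤ |a·u' + b·v'|. (This is the key inequality showing that if W₁ and W₂ are hyponormal unilateral weighted shifts with positive weight sequences (w⁽¹⁾ₙ) and (w⁽²⁾ₙ), i.e., with nondecreasing weights, and Re(a·conj(b)) ≥ 0, then a·W₁ + b·W₂ is hyponormal.) -/
/-! The squared norm `‖u • x + v • y‖² = u²‖x‖² + 2uv⟪x, y⟫ + v²‖y‖²` is nondecreasing in each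
of `u, v ≥ 0` as soon as `⟪x, y⟫ ≥ 0`; for `x = a`, `y = b` in `ℂ ≅ ℝ²` the real inner product
is `Re (a * conj b)`. -/

open RealInnerProductSpace

section InnerProductSpace

variable {E : Type*} [NormedAddCommGroup E] [InnerProductSpace ℝ E]

theorem norm_smul_add_smul_sq (x y : E) (u v : ℝ) :
    ‖u • x + v • y‖ ^ 2 = u ^ 2 * ‖x‖ ^ 2 + 2 * (u * v) * ⟪x, y⟫ + v ^ 2 * ‖y‖ ^ 2 := by
  rw [norm_add_sq_real, norm_smul, norm_smul, real_inner_smul_left, real_inner_smul_right,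
    mul_pow, mul_pow, Real.norm_eq_abs, Real.norm_eq_abs, sq_abs, sq_abs]
  ring

theorem norm_smul_add_smul_le_of_inner_nonneg {x y : E} (hxy : 0 ≤ ⟪x, y⟫) {u u' v v' : ℝ}
    (hu : 0 ≤ u) (hv : 0 ≤ v) (huu' : u ≤ u') (hvv' : v ≤ v') :
    ‖u • x + v • y‖ ≤ ‖u' • x + v' • y‖ := by
  refine (pow_le_pow_iff_left₀ (norm_nonneg _) (norm_nonneg _) two_ne_zero).mp ?_
  rw [norm_smul_add_smul_sq, norm_smul_add_smul_sq]
  gcongr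
  linarith

end InnerProductSpace

theorem abs_add_mono_of_re_mul_conj_nonneg_general (a b : ℂ)
    (hab : 0 ≤ (a * (starRingEnd ℂ) b).re)
    (u u' v v' : ℝ) (hu : 0 < u) (hv : 0 < v)
    (huu' : u ≤ u') (hvv' : v ≤ v') :
    ‖a * (u : ℂ) + b * (v : ℂ)‖ ≤ ‖a * (u' : ℂ) + b * (v' : ℂ)‖ := by
  rw [← Complex.inner, real_inner_comm] at hab
  simpa only [mul_comm a, mul_comm b, Complex.real_smul] using
    norm_smul_add_smul_le_of_inner_nonneg hab hu.le hv.le huu' hvv'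

/-- If `a, b` are complex numbers with `Re(a·conj b) ≥ 0` and `0 < u ≤ u'`, `0 < v ≤ v'`,
then `|a·u + b·v| ≤ |a·u' + b·v'|`.  This is the key inequality showing that
`a·W₁ + b·W₂` is a hyponormal weighted shift whenever `W₁`, `W₂` are hyponormal
weighted shifts (i.e. have nondecreasing positive weights) and `Re(a·conj b) ≥ 0`. -/
theorem abs_add_mono_of_re_mul_conj_nonneg (a b : ℂ)
    (hab : 0 ≤ (a * (starRingEnd ℂ) b).re)
    (u u' v v' : ℝ) (hu : 0 < u) (hv : 0 < v) (hu' : 0 < u') (hv' : 0 < v')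
    (huu' : u ≤ u') (hvv' : v ≤ v') :
    ‖a * (u : ℂ) + b * (v : ℂ)‖ ≤ ‖a * (u' : ℂ) + b * (v' : ℂ)‖ :=
  abs_add_mono_of_re_mul_conj_nonneg_general a b hab u u' v v' hu hv huu' hvv'
end

section
/- Let k ≥ 1 and j ≥ 1 be integers and let s = 2ᵏ − 1. Define γ₀ = 1 and γₙ = ∏_{i=0}^{n−1} ((2ⁱ·j + 1)/(2ⁱ·j + 2ᵏ))² for n ≥ 1. Then there exists a probability measure μ supported in [0,1] such that γₙ = ∫ tⁿ dμ(t) for all n ∈ ℕ. (These γₙ are the moments of the weighted shift with weights wₙ = (2ⁿ + 1/j)/(2ⁿ + (s+1)/j), which is the shift appearing on the orbit of founder j in the direct sum decomposition of the adjoint B*_{z^s z̄^s} of the H-Toeplitz operator with symbol z^s z̄^s on the Bergman space; hence each such shift, and therefore B*_{z^s z̄^s}, is subnormal when s = 2ᵏ − 1.) -/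
/-!
With `c_r = j / 2^(r+1)`, the product `∏_{i<n} (2^i j + 1)/(2^i j + 2^k)` telescopes to
`∏_{r<k} (c_r + 2⁻ⁿ)/(c_r + 1)`. Each factor is the `n`-th moment of the probability measure
with mass `c_r/(c_r+1)` at `1` and `1/(c_r+1)` at `1/2`, and moment sequences of probability
measures on `[0,1]` are closed under products (take the multiplicative convolution of the
measures). Hence `γₙ`, a product of `2k` such factors, is a moment sequence on `[0,1]`.
-/

open MeasureTheory Finset

def IsHausdorffMomentSeq (a : ℕ → ℝ) : Prop :=
  ∃ μ : Measure ℝ, IsProbabilityMeasure μ ∧ μ (Set.Icc (0 : ℝ) 1)ᶜ = 0 ∧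
    ∀ n, ∫ t, t ^ n ∂μ = a n

lemma integrable_pow_of_measure_compl_Icc_eq_zero {μ : Measure ℝ} [IsFiniteMeasure μ]
    (hμ : μ (Set.Icc (0 : ℝ) 1)ᶜ = 0) (n : ℕ) : Integrable (fun t : ℝ => t ^ n) μ := by
  refine .of_bound (by fun_prop) 1 ?_
  filter_upwards [mem_ae_iff.2 hμ] with t ht
  rw [norm_pow, Real.norm_of_nonneg ht.1]
  exact pow_le_one₀ ht.1 ht.2

namespace IsHausdorffMomentSeq

lemma pow_of_mem_Icc {x : ℝ} (hx : x ∈ Set.Icc (0 : ℝ) 1) :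
    IsHausdorffMomentSeq (x ^ ·) := by
  refine ⟨Measure.dirac x, inferInstance, ?_, fun n => integral_dirac _ _⟩
  rw [Measure.dirac_apply' _ measurableSet_Icc.compl, Set.indicator_of_notMem (by simpa using hx)]

lemma one : IsHausdorffMomentSeq 1 := by
  simpa [Pi.one_def] using pow_of_mem_Icc (x := 1) (by simp)

lemma convex_comb {a b : ℕ → ℝ} (ha : IsHausdorffMomentSeq a) (hb : IsHausdorffMomentSeq b)
    {θ : ℝ} (hθ : θ ∈ Set.Icc (0 : ℝ) 1) :
    IsHausdorffMomentSeq fun n => θ * a n + (1 - θ) * b n := by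
  obtain ⟨μ, _, hμ, hμa⟩ := ha
  obtain ⟨ν, _, hν, hνb⟩ := hb
  have hθ' : 0 ≤ 1 - θ := sub_nonneg.2 hθ.2
  refine ⟨ENNReal.ofReal θ • μ + ENNReal.ofReal (1 - θ) • ν, ⟨?_⟩, ?_, fun n => ?_⟩
  · simp only [Measure.add_apply, Measure.smul_apply, measure_univ, smul_eq_mul, mul_one]
    rw [← ENNReal.ofReal_add hθ.1 hθ', add_sub_cancel, ENNReal.ofReal_one]
  · simp [hμ, hν]
  · rw [integral_add_measure
      ((integrable_pow_of_measure_compl_Icc_eq_zero hμ n).smul_measure ENNReal.ofReal_ne_top)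
      ((integrable_pow_of_measure_compl_Icc_eq_zero hν n).smul_measure ENNReal.ofReal_ne_top),
      integral_smul_measure, integral_smul_measure, ENNReal.toReal_ofReal hθ.1,
      ENNReal.toReal_ofReal hθ', hμa, hνb, smul_eq_mul, smul_eq_mul]

lemma mul {a b : ℕ → ℝ} (ha : IsHausdorffMomentSeq a) (hb : IsHausdorffMomentSeq b) :
    IsHausdorffMomentSeq fun n => a n * b n := by
  obtain ⟨μ, _, hμ, hμa⟩ := ha
  obtain ⟨ν, _, hν, hνb⟩ := hb
  refine ⟨μ ∗ₘ ν, inferInstance, ?_, fun n => ?_⟩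
  · have hprod : ∀ᵐ z ∂μ.prod ν, z.1 * z.2 ∈ Set.Icc (0 : ℝ) 1 := by
      filter_upwards [Measure.quasiMeasurePreserving_fst.ae (mem_ae_iff.2 hμ),
        Measure.quasiMeasurePreserving_snd.ae (mem_ae_iff.2 hν)] with z h₁ h₂
      exact ⟨mul_nonneg h₁.1 h₂.1, mul_le_one₀ h₁.2 h₂.1 h₂.2⟩
    exact mem_ae_iff.1 ((ae_map_iff (by fun_prop) measurableSet_Icc).2 hprod)
  · rw [Measure.mconv, integral_map (by fun_prop) (by fun_prop)]
    simp only [mul_pow]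
    rw [integral_prod_mul (fun x : ℝ => x ^ n) (fun y : ℝ => y ^ n), hμa, hνb]

lemma prod {ι : Type*} (s : Finset ι) {a : ι → ℕ → ℝ}
    (h : ∀ i ∈ s, IsHausdorffMomentSeq (a i)) :
    IsHausdorffMomentSeq fun n => ∏ i ∈ s, a i n := by
  induction s using Finset.cons_induction with
  | empty => simpa [Pi.one_def] using one
  | cons i s hi ih =>
    simp only [prod_cons]
    exact (h i (mem_cons_self i s)).mul (ih fun i' hi' => h i' (mem_cons_of_mem hi'))

lemma add_pow_div_add_one {c x : ℝ} (hc : 0 ≤ c) (hx : x ∈ Set.Icc (0 : ℝ) 1) :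
    IsHausdorffMomentSeq fun n => (c + x ^ n) / (c + 1) := by
  have hθ : c / (c + 1) ∈ Set.Icc (0 : ℝ) 1 :=
    ⟨by positivity, div_le_one_of_le₀ (by linarith) (by positivity)⟩
  convert convex_comb (pow_of_mem_Icc (x := 1) (by simp)) (pow_of_mem_Icc hx) hθ using 2 with n
  field_simp
  ring

end IsHausdorffMomentSeq

lemma prod_range_add_div_two_div_add {y t : ℝ} (hy : 0 ≤ y) (ht : 0 < t) (k : ℕ) :
    ∏ r ∈ range k, (y / 2 ^ (r + 1) + t / 2) / (y / 2 ^ (r + 1) + t) =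
      (y + t) / (y + 2 ^ k * t) := by
  induction k with
  | zero => rw [prod_range_zero, pow_zero, one_mul, div_self (by positivity)]
  | succ k ih =>
    rw [prod_range_succ, ih]
    field_simp
    ring

lemma prod_range_two_pow_mul_add_div {y : ℝ} (hy : 0 ≤ y) (k n : ℕ) :
    ∏ i ∈ range n, (2 ^ i * y + 1) / (2 ^ i * y + 2 ^ k) =
      ∏ r ∈ range k, (y / 2 ^ (r + 1) + (1 / 2) ^ n) / (y / 2 ^ (r + 1) + 1) := by
  induction n with
  | zero =>
    rw [prod_range_zero]
    exact (prod_eq_one fun r _ => by rw [pow_zero, div_self (by positivity)]).symm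
  | succ n ih =>
    rw [prod_range_succ, ih, pow_succ, ← div_eq_mul_one_div]
    have ht : 0 < (1 / 2 : ℝ) ^ n := by positivity
    have h2t : 2 ^ n * (1 / 2 : ℝ) ^ n = 1 := by rw [← mul_pow]; norm_num
    generalize (1 / 2 : ℝ) ^ n = t at ht h2t ⊢
    -- halving `t` multiplies the right side by `(y + t) / (y + 2 ^ k * t)`, by telescoping in `r`
    have hfactor : ∀ c : ℝ, 0 ≤ c →
        (c + t / 2) / (c + 1) = (c + t) / (c + 1) * ((c + t / 2) / (c + t)) := fun c hc => by
      rw [div_mul_div_comm, mul_comm (c + t), mul_div_mul_right _ _ (by positivity)]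
    rw [prod_congr rfl fun r _ => hfactor _ (by positivity), prod_mul_distrib,
      prod_range_add_div_two_div_add hy ht,
      ← mul_div_mul_left (y + t) _ (pow_ne_zero n two_ne_zero)]
    congr 2
    · linear_combination -h2t
    · linear_combination -2 ^ k * h2t

theorem subnormal_shift_s_eq_two_pow_sub_one_general (k j : ℕ) :
    ∃ μ : Measure ℝ, IsProbabilityMeasure μ ∧ μ (Set.Icc (0 : ℝ) 1)ᶜ = 0 ∧
      ∀ n : ℕ, ∫ t, t ^ n ∂μ =
        ∏ i ∈ Finset.range n,
          (((2 : ℝ) ^ i * j + 1) / ((2 : ℝ) ^ i * j + 2 ^ k)) ^ 2 := by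
  have hfactor : ∀ r ∈ range k, IsHausdorffMomentSeq fun n =>
      ((j / 2 ^ (r + 1) + (1 / 2 : ℝ) ^ n) / (j / 2 ^ (r + 1) + 1)) ^ 2 := fun r _ => by
    have h := IsHausdorffMomentSeq.add_pow_div_add_one (c := j / 2 ^ (r + 1)) (x := 1 / 2)
      (by positivity) ⟨by norm_num, by norm_num⟩
    simpa only [sq] using h.mul h
  obtain ⟨μ, hμ, hsupp, hmoments⟩ := IsHausdorffMomentSeq.prod _ hfactor
  refine ⟨μ, hμ, hsupp, fun n => ?_⟩
  simp only [hmoments, Finset.prod_pow]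
  rw [prod_range_two_pow_mul_add_div (Nat.cast_nonneg j)]

/-- Let `k ≥ 1`, `j ≥ 1` (and `s = 2ᵏ − 1`).  The moments
`γₙ = ∏_{i=0}^{n−1} ((2ⁱj + 1)/(2ⁱj + 2ᵏ))²` are the moments of a probability measure
supported in `[0,1]`.  These are the moments of the weighted shift appearing on the orbit
of founder `j` in the direct sum decomposition of `B*_{zˢ z̄ˢ}` on the Bergman space;
hence each such shift, and therefore `B*_{zˢ z̄ˢ}`, is subnormal when `s = 2ᵏ − 1`. -/
theorem subnormal_shift_s_eq_two_pow_sub_one (k j : ℕ) (hk : 1 ≤ k) (hj : 1 ≤ j) :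
    ∃ μ : Measure ℝ, IsProbabilityMeasure μ ∧ μ (Set.Icc (0 : ℝ) 1)ᶜ = 0 ∧
      ∀ n : ℕ, ∫ t, t ^ n ∂μ =
        ∏ i ∈ Finset.range n,
          (((2 : ℝ) ^ i * j + 1) / ((2 : ℝ) ^ i * j + 2 ^ k)) ^ 2 :=
  subnormal_shift_s_eq_two_pow_sub_one_general k j
end

section
/- Let d ≥ 1, s, and j ≥ 0 be integers with d ≤ s ≤ 3d − 2. Define the sequence aₙ = log( (2ⁿ(2d + j) + 1 − 2d)·(2ⁿ(2d + j) + 1 − d) / (2ⁿ(2d + j) + 1 + s − 2d)² ) for n ∈ ℕ (all the factors appearing are positive). Then the sequence (aₙ) is completely alternating. (The quantity inside the logarithm is the square wₙ² of the n-th weight of the shift appearing on the orbit of founder j in the direct sum decomposition of B*_{z^t z̄^s}, with t = s − d, on the Bergman space; a shift whose squared weights form a log completely alternating sequence is moment infinitely divisible (MID). Hence for s ≤ 3d − 2 each shift in the decomposition, and therefore B*_{z^t z̄^s}, is MID.) -/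
/-!
Writing `y = c qⁿ` with `c = 2d + j`, `q = 2`, the sequence is
`log(1 - A/y) + log(1 - B/y) - 2 log(1 - E/y)` with `A = 2d - 1`, `B = d - 1`, `E = 2d - 1 - s`,
and `d ≤ s ≤ 3d - 2` says exactly `|E| ≤ B`. Expanding the logarithms gives
`aₙ = ∑ₚ βₚ rₚⁿ` with `rₚ = q^{-(p+1)} ∈ (0, 1]` and
`βₚ = (2 (E/c)^{p+1} - (A/c)^{p+1} - (B/c)^{p+1}) / (p + 1) ≤ 0`.
Each `n ↦ β rⁿ` is completely alternating, its `k`-th difference at `m` being `β rᵐ (1 - r)ᵏ`,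
and complete alternation survives convergent sums.
-/

/-- A sequence `a : ℕ → ℝ` is *completely alternating* if for every `k ≥ 1` and every `m`,
`∑_{i=0}^{k} (−1)ⁱ·binom(k,i)·a_{m+i} ≤ 0`. -/
def CompletelyAlternating (a : ℕ → ℝ) : Prop :=
  ∀ k : ℕ, 1 ≤ k → ∀ m : ℕ,
    ∑ i ∈ Finset.range (k + 1), (-1 : ℝ) ^ i * (k.choose i) * a (m + i) ≤ 0

open Finset Real

lemma sum_range_neg_one_pow_mul_choose_mul_pow (k m : ℕ) (r : ℝ) :
    ∑ i ∈ range (k + 1), (-1 : ℝ) ^ i * (k.choose i) * r ^ (m + i) = r ^ m * (1 - r) ^ k := by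
  rw [show (1 - r : ℝ) = -r + 1 by ring, add_pow, mul_sum]
  refine sum_congr rfl fun i _ => ?_
  rw [pow_add, neg_pow, one_pow]
  ring

namespace CompletelyAlternating

theorem const_mul_pow {b r : ℝ} (hb : b ≤ 0) (hr₀ : 0 ≤ r) (hr₁ : r ≤ 1) :
    CompletelyAlternating (fun n => b * r ^ n) := by
  intro k _ m
  have h1r : 0 ≤ 1 - r := sub_nonneg.2 hr₁
  calc ∑ i ∈ range (k + 1), (-1 : ℝ) ^ i * k.choose i * (b * r ^ (m + i))
      = b * (r ^ m * (1 - r) ^ k) := by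
        simp_rw [mul_left_comm _ b, ← mul_sum, sum_range_neg_one_pow_mul_choose_mul_pow]
    _ ≤ 0 := mul_nonpos_of_nonpos_of_nonneg hb (by positivity)

theorem of_hasSum {f : ℕ → ℕ → ℝ} {a : ℕ → ℝ} (hf : ∀ p, CompletelyAlternating (f p))
    (ha : ∀ n, HasSum (fun p => f p n) (a n)) : CompletelyAlternating a := fun k hk m =>
  hasSum_le (fun p => hf p k hk m) (hasSum_sum fun i _ => (ha (m + i)).mul_left _) hasSum_zero

end CompletelyAlternating

lemma hasSum_log_one_sub_div_mul_pow {q c x : ℝ} (hq : 1 ≤ q) (hx : |x| < c) (n : ℕ) :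
    HasSum (fun p : ℕ => -((x / c) ^ (p + 1) / (p + 1)) * ((q ^ (p + 1))⁻¹) ^ n)
      (log (1 - x / (c * q ^ n))) := by
  have hc : 0 < c := (abs_nonneg x).trans_lt hx
  have hq₀ : 0 < q := one_pos.trans_le hq
  have hy : 0 < c * q ^ n := mul_pos hc (pow_pos hq₀ n)
  have h : |x / (c * q ^ n)| < 1 := by
    rw [abs_div, abs_of_pos hy, div_lt_one hy]
    exact hx.trans_le (le_mul_of_one_le_right hc.le (one_le_pow₀ hq))
  refine neg_neg (log (1 - x / (c * q ^ n))) ▸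
    (hasSum_pow_div_log_of_abs_lt_one h).neg.congr_fun fun p => ?_
  rw [inv_pow, ← pow_mul, mul_comm (p + 1) n, pow_mul, div_pow, div_pow, mul_pow]
  field_simp

theorem completelyAlternating_log_mul_div_sq {q c A B E : ℝ} (hq : 1 ≤ q) (hA : A < c)
    (hBA : B ≤ A) (hEB : |E| ≤ B) :
    CompletelyAlternating (fun n =>
      log ((c * q ^ n - A) * (c * q ^ n - B) / (c * q ^ n - E) ^ 2)) := by
  have hB : 0 ≤ B := (abs_nonneg E).trans hEB
  have hc : 0 < c := hB.trans_lt (hBA.trans_lt hA)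
  have hAc : |A| < c := by rwa [abs_of_nonneg (hB.trans hBA)]
  have hBc : |B| < c := by rw [abs_of_nonneg hB]; linarith
  have hEc : |E| < c := by linarith
  have hlog : ∀ n, log ((c * q ^ n - A) * (c * q ^ n - B) / (c * q ^ n - E) ^ 2) =
      log (1 - A / (c * q ^ n)) + log (1 - B / (c * q ^ n)) - 2 * log (1 - E / (c * q ^ n)) := by
    intro n
    have hy : c ≤ c * q ^ n := le_mul_of_one_le_right hc.le (one_le_pow₀ hq)
    have hyA : 0 < 1 - A / (c * q ^ n) := by rw [sub_pos, div_lt_one (by linarith)]; linarith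
    have hyB : 0 < 1 - B / (c * q ^ n) := by rw [sub_pos, div_lt_one (by linarith)]; linarith
    have hyE : 0 < 1 - E / (c * q ^ n) := by
      rw [sub_pos, div_lt_one (by linarith)]; linarith [le_abs_self E]
    rw [show (c * q ^ n - A) * (c * q ^ n - B) / (c * q ^ n - E) ^ 2 =
        (1 - A / (c * q ^ n)) * (1 - B / (c * q ^ n)) / (1 - E / (c * q ^ n)) ^ 2 by
          field_simp,
      log_div (by positivity) (by positivity), log_mul hyA.ne' hyB.ne', log_pow]
    push_cast
    ring
  set β : ℕ → ℝ := fun p =>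
    (2 * (E / c) ^ (p + 1) - (A / c) ^ (p + 1) - (B / c) ^ (p + 1)) / (p + 1)
  have hβ : ∀ p, β p ≤ 0 := fun p => by
    have hEB' : (E / c) ^ (p + 1) ≤ (B / c) ^ (p + 1) :=
      (le_abs_self _).trans <| by
        rw [abs_pow, abs_div, abs_of_pos hc]; gcongr
    have hBA' : (B / c) ^ (p + 1) ≤ (A / c) ^ (p + 1) := by gcongr
    exact div_nonpos_of_nonpos_of_nonneg (by linarith) (by positivity)
  refine CompletelyAlternating.of_hasSum (f := fun p n => β p * ((q ^ (p + 1))⁻¹) ^ n)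
    (fun p => .const_mul_pow (hβ p) (by positivity) (inv_le_one_of_one_le₀ (one_le_pow₀ hq)))
    fun n => ?_
  rw [hlog]
  refine (((hasSum_log_one_sub_div_mul_pow hq hAc n).add
    (hasSum_log_one_sub_div_mul_pow hq hBc n)).sub
    ((hasSum_log_one_sub_div_mul_pow hq hEc n).mul_left 2)).congr_fun fun p => ?_
  ring

/-- Let `d ≥ 1`, `d ≤ s ≤ 3d − 2`, `j ≥ 0`.  Then the sequence
`aₙ = log((2ⁿ(2d+j)+1−2d)(2ⁿ(2d+j)+1−d)/(2ⁿ(2d+j)+1+s−2d)²)` is completely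
alternating.  The quantity inside the logarithm is the squared `n`-th weight of the shift
on the orbit of founder `j` in the decomposition of `B*_{zᵗ z̄ˢ}` (`t = s − d`) on the
Bergman space; hence for `s ≤ 3d − 2` each such shift, and therefore `B*_{zᵗ z̄ˢ}`, is
moment infinitely divisible. -/
theorem log_weights_completely_alternating (d s j : ℤ) (hd : 1 ≤ d) (hds : d ≤ s)
    (hs : s ≤ 3 * d - 2) (hj : 0 ≤ j) :
    CompletelyAlternating (fun n =>
      Real.log (((2 : ℝ) ^ n * (2 * (d : ℝ) + (j : ℝ)) + 1 - 2 * (d : ℝ)) *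
          ((2 : ℝ) ^ n * (2 * (d : ℝ) + (j : ℝ)) + 1 - (d : ℝ)) /
        ((2 : ℝ) ^ n * (2 * (d : ℝ) + (j : ℝ)) + 1 + (s : ℝ) - 2 * (d : ℝ)) ^ 2)) := by
  have hd' : (1 : ℝ) ≤ d := by exact_mod_cast hd
  have hds' : (d : ℝ) ≤ s := by exact_mod_cast hds
  have hs' : (s : ℝ) ≤ 3 * d - 2 := by exact_mod_cast hs
  have hj' : (0 : ℝ) ≤ j := by exact_mod_cast hj
  have h := completelyAlternating_log_mul_div_sq (q := 2) (c := 2 * d + j) (A := 2 * d - 1)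
    (B := d - 1) (E := 2 * d - 1 - s) one_le_two (by linarith) (by linarith)
    (abs_le.2 ⟨by linarith, by linarith⟩)
  convert h using 4 <;> ring
end

section
/- For all integers δ ≥ 2 and s ≥ 0, one has the identity (δ + 1)(s + 2δ)² − 2δ²(s + δ + 1)² = −(δ − 1)(2δ³ + (4s + 2)δ² + 2s(s + 2)δ + s²), and this quantity is strictly negative. (This computes ⟨(B*B − BB*)e_{2δ−1}, e_{2δ−1}⟩ up to the positive factor 1/((s + δ + 1)²(s + 2δ)²) for B* = B*_{z^t z̄^s} with t = s + δ on the Bergman space, and shows the restriction of B* to the span of e₀, ..., e_{2δ−1} is never hyponormal for δ ≥ 2 and any s ≥ 0.) -/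
/-- For integers `δ ≥ 2` and `s ≥ 0`,
`(δ+1)(s+2δ)² − 2δ²(s+δ+1)² = −(δ−1)(2δ³+(4s+2)δ²+2s(s+2)δ+s²)`, and this quantity is
strictly negative, i.e. `(δ+1)(s+2δ)² < 2δ²(s+δ+1)²`.  This computes
`⟨(B*B − BB*)e_{2δ−1}, e_{2δ−1}⟩` up to a positive factor and shows the matricial part of
`B*_{zᵗ z̄ˢ}` (`t = s + δ`) is never hyponormal for `δ ≥ 2`. -/
theorem commutator_entry_negative (δ s : ℤ) (hδ : 2 ≤ δ) (hs : 0 ≤ s) :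
    ((δ + 1) * (s + 2 * δ) ^ 2 - 2 * δ ^ 2 * (s + δ + 1) ^ 2
        = -((δ - 1) * (2 * δ ^ 3 + (4 * s + 2) * δ ^ 2 + 2 * s * (s + 2) * δ + s ^ 2))) ∧
    (δ + 1) * (s + 2 * δ) ^ 2 < 2 * δ ^ 2 * (s + δ + 1) ^ 2 := by
  constructor
  · ring
  · nlinarith [mul_nonneg (mul_nonneg (by linarith : (0:ℤ) ≤ δ - 1) hs) hs, mul_nonneg (mul_nonneg (by linarith : (0:ℤ) ≤ δ - 1) (by linarith : (0:ℤ) ≤ δ)) hs, mul_nonneg (mul_nonneg (by linarith : (0:ℤ) ≤ δ - 1) (by linarith : (0:ℤ) ≤ δ)) (by linarith : (0:ℤ) ≤ δ), sq_nonneg s]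
end

section
/- Let α > −1 be a real number and let d ≥ 1, s ≥ 0, and i with 0 ≤ i ≤ d − 1 be integers. For ℓ ∈ ℕ define W_ℓ = [∏_{m=1}^{d} (ℓd + m + i)/(ℓd + m + i + α + 1)] · [∏_{q=1}^{s} (ℓd + q + i + d)/(ℓd + q + i + d + α + 1)]². Then the sequence (log W_ℓ)_{ℓ≥0} is completely alternating. (W_ℓ is the square of the ℓ-th weight of the shift acting on the orbit with founder i in the direct sum decomposition of the Toeplitz operator T_{z̄^s z^{s+d}} on the weighted Bergman space A²_α(𝔻); a shift whose squared weights form a log completely alternating sequence is moment infinitely divisible (MID). Hence each of the d shifts in the decomposition is MID and in particular subnormal, so T_{z̄^s z^{s+d}} is subnormal and hyponormal, and its adjoint is not hyponormal when d ≥ 1.) -/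
open Finset Real fwdDiff

namespace CompletelyAlternating

variable {a b : ℕ → ℝ}

theorem add (ha : CompletelyAlternating a) (hb : CompletelyAlternating b) :
    CompletelyAlternating fun n => a n + b n := by
  intro k hk m
  simpa only [mul_add, sum_add_distrib] using add_nonpos (ha k hk m) (hb k hk m)

theorem const_mul (ha : CompletelyAlternating a) {c : ℝ} (hc : 0 ≤ c) :
    CompletelyAlternating fun n => c * a n := by
  intro k hk m
  simpa only [mul_sum, mul_left_comm c] using mul_nonpos_of_nonneg_of_nonpos hc (ha k hk m)

theorem finsetSum {ι : Type*} {s : Finset ι} {a : ι → ℕ → ℝ}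
    (ha : ∀ i ∈ s, CompletelyAlternating (a i)) :
    CompletelyAlternating fun n => ∑ i ∈ s, a i n := by
  intro k hk m
  simp only [mul_sum]
  rw [sum_comm]
  exact sum_nonpos fun i hi => ha i hi k hk m

theorem intervalIntegral {G : ℝ → ℕ → ℝ} {a b : ℝ} (hab : a ≤ b)
    (hG : ∀ u ∈ Set.Icc a b, CompletelyAlternating (G u))
    (hint : ∀ n, IntervalIntegrable (fun u => G u n) MeasureTheory.volume a b) :
    CompletelyAlternating fun n => ∫ u in a..b, G u n := by
  intro k hk m
  simp_rw [← intervalIntegral.integral_const_mul]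
  rw [← intervalIntegral.integral_finsetSum fun i _ => (hint (m + i)).const_mul _]
  rw [← neg_nonneg, ← intervalIntegral.integral_neg]
  exact intervalIntegral.integral_nonneg hab fun u hu => neg_nonneg.mpr (hG u hu k hk m)

theorem log_mul (ha₀ : ∀ n, a n ≠ 0) (hb₀ : ∀ n, b n ≠ 0)
    (ha : CompletelyAlternating fun n => log (a n))
    (hb : CompletelyAlternating fun n => log (b n)) :
    CompletelyAlternating fun n => log (a n * b n) := by
  simpa only [Real.log_mul (ha₀ _) (hb₀ _)] using ha.add hb

theorem log_pow (ha : CompletelyAlternating fun n => log (a n)) (p : ℕ) :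
    CompletelyAlternating fun n => log (a n ^ p) := by
  simpa only [Real.log_pow] using ha.const_mul p.cast_nonneg

theorem log_prod {ι : Type*} {s : Finset ι} {a : ι → ℕ → ℝ} (ha₀ : ∀ i ∈ s, ∀ n, a i n ≠ 0)
    (ha : ∀ i ∈ s, CompletelyAlternating fun n => log (a i n)) :
    CompletelyAlternating fun n => log (∏ i ∈ s, a i n) := by
  simpa only [Real.log_prod fun i hi => ha₀ i hi _] using finsetSum ha

end CompletelyAlternating

theorem neg_one_pow_mul_fwdDiff_iter_eq_sum (a : ℕ → ℝ) (k m : ℕ) :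
    (-1) ^ k * (Δ_[1])^[k] a m = ∑ i ∈ range (k + 1), (-1 : ℝ) ^ i * k.choose i * a (m + i) := by
  rw [fwdDiff_iter_eq_sum_shift, mul_sum]
  refine sum_congr rfl fun i hi => ?_
  obtain ⟨j, rfl⟩ := Nat.exists_eq_add_of_le (mem_range_succ_iff.mp hi)
  rw [Nat.add_sub_cancel_left, zsmul_eq_mul, smul_eq_mul, mul_one]
  push_cast
  have hsign : (-1 : ℝ) ^ (i + j) * (-1) ^ j = (-1) ^ i := by
    rw [pow_add, mul_assoc, ← mul_pow, neg_one_mul, neg_neg, one_pow, mul_one]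
  linear_combination ((i + j).choose i * a (m + i) : ℝ) * hsign

open Nat in
theorem fwdDiff_iter_inv_add_mul {x t : ℝ} (h : ∀ n : ℕ, x + n * t ≠ 0) (k m : ℕ) :
    (Δ_[1])^[k] (fun n : ℕ => (x + n * t)⁻¹) m
      = (-t) ^ k * k ! / ∏ j ∈ range (k + 1), (x + ((m + j : ℕ) : ℝ) * t) := by
  induction k generalizing m with
  | zero => simp
  | succ k ih =>
    set P := fun (p m : ℕ) => ∏ j ∈ range p, (x + ((m + j : ℕ) : ℝ) * t)
    have hP : ∀ p m, P p m ≠ 0 := fun p m => prod_ne_zero_iff.mpr fun j _ => h _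
    have hlast : P (k + 2) m = P (k + 1) m * (x + (m + k + 1) * t) := by
      simp only [P, prod_range_succ _ (k + 1)]
      push_cast
      ring
    have hfirst : P (k + 2) m = P (k + 1) (m + 1) * (x + m * t) := by
      simp only [P, prod_range_succ' _ (k + 1), Nat.add_right_comm m 1, ← Nat.add_assoc, add_zero]
    rw [Function.iterate_succ_apply', fwdDiff, ih, ih, div_sub_div _ _ (hP _ _) (hP _ _),
      div_eq_div_iff (mul_ne_zero (hP _ _) (hP _ _)) (hP _ _)]
    push_cast [factorial_succ]
    linear_combination ((-t) ^ k * k ! * P (k + 1) m) * hfirst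
      - ((-t) ^ k * k ! * P (k + 1) (m + 1)) * hlast

theorem completelyAlternating_neg_inv_add_mul {x t : ℝ} (hx : 0 < x) (ht : 0 ≤ t) :
    CompletelyAlternating fun n => -(x + n * t)⁻¹ := by
  intro k _ m
  have hpos : ∀ n : ℕ, 0 < x + n * t := fun n => by positivity
  simp only [mul_neg, sum_neg_distrib, neg_nonpos]
  rw [← neg_one_pow_mul_fwdDiff_iter_eq_sum (fun n : ℕ => (x + n * t)⁻¹),
    fwdDiff_iter_inv_add_mul fun n => (hpos n).ne', ← mul_div_assoc, ← mul_assoc, ← mul_pow,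
    neg_one_mul, neg_neg]
  exact div_nonneg (by positivity) (prod_nonneg fun j _ => (hpos _).le)

theorem completelyAlternating_log_div_add {x t β : ℝ} (hx : 0 < x) (ht : 0 ≤ t) (hβ : 0 ≤ β) :
    CompletelyAlternating fun n => log ((x + n * t) / (x + n * t + β)) := by
  have hpos : ∀ u ∈ Set.Icc 0 β, ∀ n : ℕ, 0 < x + u + n * t := fun u hu n => by
    have := hu.1
    positivity
  have hrep : ∀ n : ℕ, log ((x + n * t) / (x + n * t + β)) = ∫ u in 0..β, -(x + u + n * t)⁻¹ := by
    intro n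
    have hy : 0 < x + n * t := by positivity
    have hshift : ∀ u, x + u + n * t = u + (x + n * t) := fun u => by ring
    simp_rw [intervalIntegral.integral_neg, hshift]
    rw [intervalIntegral.integral_comp_add_right (fun u => u⁻¹), zero_add,
      integral_inv_of_pos hy (by linarith), ← Real.log_inv, inv_div, add_comm β]
  simp_rw [hrep]
  refine .intervalIntegral hβ (fun u hu => completelyAlternating_neg_inv_add_mul ?_ ht) fun n => ?_
  · simpa using hpos u hu 0
  · refine (ContinuousOn.neg (ContinuousOn.inv₀ (by fun_prop) fun u hu => ?_)).intervalIntegrable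
    rw [Set.uIcc_of_le hβ] at hu
    exact (hpos u hu n).ne'

theorem log_weights_weighted_bergman_completely_alternating_general
    (α : ℝ) (hα : -1 < α) (d s i : ℕ) :
    CompletelyAlternating (fun ℓ =>
      Real.log
        ((∏ m ∈ Finset.Icc 1 d,
            ((ℓ * d + m + i : ℕ) : ℝ) / (((ℓ * d + m + i : ℕ) : ℝ) + α + 1)) *
          (∏ q ∈ Finset.Icc 1 s,
            ((ℓ * d + q + i + d : ℕ) : ℝ) / (((ℓ * d + q + i + d : ℕ) : ℝ) + α + 1)) ^ 2)) := by
  have hne : ∀ n : ℕ, 1 ≤ n → (n : ℝ) / (n + α + 1) ≠ 0 := fun n hn => by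
    have : (1 : ℝ) ≤ n := by exact_mod_cast hn
    exact div_ne_zero (by positivity) (by linarith)
  have hfactor : ∀ c : ℕ, 1 ≤ c → CompletelyAlternating fun ℓ : ℕ =>
      log (((ℓ * d + c : ℕ) : ℝ) / (((ℓ * d + c : ℕ) : ℝ) + α + 1)) := fun c hc => by
    convert completelyAlternating_log_div_add (x := c) (t := d) (β := α + 1) (by positivity)
      (by positivity) (by linarith) using 4 <;> push_cast <;> ring
  refine .log_mul (fun ℓ => prod_ne_zero_iff.mpr fun m hm => hne _ (by grind))
    (fun ℓ => pow_ne_zero _ (prod_ne_zero_iff.mpr fun q hq => hne _ (by grind)))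
    (.log_prod (fun m hm ℓ => hne _ (by grind)) fun m hm => ?_)
    ((CompletelyAlternating.log_prod (fun q hq ℓ => hne _ (by grind)) fun q hq => ?_).log_pow 2)
  · simpa only [Nat.add_assoc] using hfactor (m + i) (by grind)
  · simpa only [Nat.add_assoc] using hfactor (q + i + d) (by grind)

/-- Let `α > −1`, `d ≥ 1`, `s ≥ 0`, `0 ≤ i ≤ d − 1`, and for `ℓ ∈ ℕ` let
`W_ℓ = [∏_{m=1}^{d} (ℓd+m+i)/(ℓd+m+i+α+1)]·[∏_{q=1}^{s} (ℓd+q+i+d)/(ℓd+q+i+d+α+1)]²`.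
Then `(log W_ℓ)` is completely alternating.  `W_ℓ` is the squared `ℓ`-th weight of the
shift on the orbit with founder `i` in the decomposition of `T_{z̄ˢ z^{s+d}}` on the
weighted Bergman space `A²_α(𝔻)`; hence each of the `d` shifts in the decomposition is
moment infinitely divisible, in particular subnormal. -/
theorem log_weights_weighted_bergman_completely_alternating
    (α : ℝ) (hα : -1 < α) (d s i : ℕ) (hd : 1 ≤ d) (hi : i ≤ d - 1) :
    CompletelyAlternating (fun ℓ =>
      Real.log
        ((∏ m ∈ Finset.Icc 1 d,
            ((ℓ * d + m + i : ℕ) : ℝ) / (((ℓ * d + m + i : ℕ) : ℝ) + α + 1)) *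
          (∏ q ∈ Finset.Icc 1 s,
            ((ℓ * d + q + i + d : ℕ) : ℝ) / (((ℓ * d + q + i + d : ℕ) : ℝ) + α + 1)) ^ 2)) :=
  log_weights_weighted_bergman_completely_alternating_general α hα d s i
end

section
/- Let w₁, ..., w_N : ℕ → (0, ∞) be finitely many positive sequences such that for each i the sequence (wᵢ(n)²)_{n≥0} is completely alternating, and let a₁, ..., a_N ≥ 0 be nonnegative reals, not all zero. Then the sequence (log(∑_{i=1}^{N} aᵢ·wᵢ(n)))_{n≥0} is completely alternating. (This is the key step showing that a weighted shift whose weight sequence is a nonnegative linear combination of weight sequences, each with completely alternating squares, is moment infinitely divisible; it underlies the theorem that B*_{∑ aᵢ z^{tᵢ} z̄^{sᵢ}} is MID when all sᵢ ≤ 2d − 1 with common d = sᵢ − tᵢ.) -/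
namespace CAKey

open Finset Filter Topology

/-- The alternating `k`-th difference functional at `m`. -/
noncomputable def A (k m : ℕ) (f : ℕ → ℝ) : ℝ :=
  ∑ i ∈ Finset.range (k + 1), (-1 : ℝ) ^ i * (k.choose i) * f (m + i)

lemma A_congr {k m : ℕ} {f g : ℕ → ℝ} (h : ∀ i ≤ k, f (m + i) = g (m + i)) :
    A k m f = A k m g := by
  refine Finset.sum_congr rfl fun i hi => ?_
  rw [h i (by simpa [Nat.lt_succ_iff] using hi)]

lemma A_zero (m : ℕ) (f : ℕ → ℝ) : A 0 m f = f m := by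
  simp [A]

lemma A_sub (k m : ℕ) (f g : ℕ → ℝ) :
    A k m (fun n => f n - g n) = A k m f - A k m g := by
  unfold A; rw [← Finset.sum_sub_distrib]
  exact Finset.sum_congr rfl fun i _ => by ring

lemma A_add (k m : ℕ) (f g : ℕ → ℝ) :
    A k m (fun n => f n + g n) = A k m f + A k m g := by
  unfold A; rw [← Finset.sum_add_distrib]
  exact Finset.sum_congr rfl fun i _ => by ring

lemma A_mul_left (k m : ℕ) (c : ℝ) (f : ℕ → ℝ) :
    A k m (fun n => c * f n) = c * A k m f := by
  unfold A; rw [Finset.mul_sum]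
  exact Finset.sum_congr rfl fun i _ => by ring

lemma A_const (k m : ℕ) (c : ℝ) (hk : 1 ≤ k) : A k m (fun _ => c) = 0 := by
  have h0 : (∑ i ∈ range (k + 1), (-1 : ℝ) ^ i * (k.choose i)) = 0 := by
    have h := congrArg (fun z : ℤ => (z : ℝ)) (Int.alternating_sum_range_choose (n := k))
    push_cast at h
    simpa [if_neg (by omega : k ≠ 0)] using h
  calc A k m (fun _ => c)
      = (∑ i ∈ range (k + 1), (-1 : ℝ) ^ i * (k.choose i)) * c := by
        unfold A; rw [Finset.sum_mul]
    _ = 0 := by rw [h0, zero_mul]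

lemma A_shift (k m : ℕ) (f : ℕ → ℝ) : A k m (fun n => f (n + 1)) = A k (m + 1) f := by
  refine Finset.sum_congr rfl fun i _ => ?_
  show (-1:ℝ) ^ i * (k.choose i) * f (m + i + 1) = _
  have : m + i + 1 = m + 1 + i := by omega
  rw [this]

lemma A_eq_fwdDiff (k m : ℕ) (f : ℕ → ℝ) :
    A k m f = (-1 : ℝ) ^ k * (fwdDiff 1)^[k] f m := by
  rw [fwdDiff_iter_eq_sum_shift, Finset.mul_sum]
  refine Finset.sum_congr rfl fun i hi => ?_
  have hik : i ≤ k := by simpa [Nat.lt_succ_iff] using hi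
  have h1 : (((-1 : ℤ) ^ (k - i) * (k.choose i)) • f (m + i • 1)) =
      ((-1 : ℝ) ^ (k - i) * (k.choose i)) * f (m + i) := by
    rw [zsmul_eq_mul]; push_cast [smul_eq_mul, mul_one]; ring
  rw [h1]
  have h2 : (-1 : ℝ) ^ k * (-1 : ℝ) ^ (k - i) = (-1 : ℝ) ^ i := by
    rw [← pow_add]
    have h3 : k + (k - i) = 2 * (k - i) + i := by omega
    rw [h3, pow_add, pow_mul, neg_one_sq, one_pow, one_mul]
  calc (-1 : ℝ) ^ i * (k.choose i) * f (m + i)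
      = ((-1 : ℝ) ^ k * (-1 : ℝ) ^ (k - i)) * (k.choose i) * f (m + i) := by rw [h2]
    _ = (-1 : ℝ) ^ k * ((-1 : ℝ) ^ (k - i) * (k.choose i) * f (m + i)) := by ring

lemma A_succ (k m : ℕ) (f : ℕ → ℝ) : A (k + 1) m f = A k m f - A k (m + 1) f := by
  have h1 : A (k + 1) m f = (-1 : ℝ) ^ (k + 1) * (fwdDiff 1)^[k + 1] f m :=
    A_eq_fwdDiff (k + 1) m f
  rw [Function.iterate_succ_apply] at h1
  have h2 : (-1 : ℝ) ^ (k + 1) * (fwdDiff 1)^[k] (fwdDiff 1 f) m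
      = -((-1 : ℝ) ^ k * (fwdDiff 1)^[k] (fwdDiff 1 f) m) := by ring
  rw [h1, h2, ← A_eq_fwdDiff]
  have h3 : A k m (fwdDiff 1 f) = A k m (fun n => f (n + 1)) - A k m f := by
    rw [← A_sub]
    exact A_congr fun i _ => rfl
  rw [h3, A_shift]; ring

lemma A_succ_D (k m : ℕ) (f : ℕ → ℝ) :
    A (k + 1) m f = A k m (fun n => f n - f (n + 1)) := by
  rw [A_sub, A_shift, A_succ]

def CMW (m₀ B : ℕ) (f : ℕ → ℝ) : Prop :=
  ∀ k m, m₀ ≤ m → m + k ≤ B → 0 ≤ A k m f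

lemma CMW_mul_aux : ∀ k : ℕ, ∀ (f g : ℕ → ℝ) (m₀ B : ℕ), CMW m₀ B f → CMW m₀ B g →
    ∀ m, m₀ ≤ m → m + k ≤ B → 0 ≤ A k m (fun n => f n * g n) := by
  intro k
  induction k with
  | zero =>
    intro f g m₀ B hf hg m hm hB
    rw [A_zero]
    have h1 := hf 0 m hm (by omega)
    have h2 := hg 0 m hm (by omega)
    rw [A_zero] at h1 h2
    exact mul_nonneg h1 h2
  | succ k ih =>
    intro f g m₀ B hf hg m hm hB
    rw [A_succ_D]
    have key : A k m (fun n => f n * g n - f (n + 1) * g (n + 1))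
        = A k m (fun n => f n * (g n - g (n + 1)))
          + A k m (fun n => (f n - f (n + 1)) * g (n + 1)) := by
      rw [← A_add]
      exact A_congr fun i _ => by ring
    rw [key]
    have hDg : CMW m₀ (B - 1) (fun n => g n - g (n + 1)) := by
      intro k' m' hm' hk'
      rw [← A_succ_D]
      exact hg (k' + 1) m' hm' (by omega)
    have hDf : CMW m₀ (B - 1) (fun n => f n - f (n + 1)) := by
      intro k' m' hm' hk'
      rw [← A_succ_D]
      exact hf (k' + 1) m' hm' (by omega)
    have hgs : CMW m₀ (B - 1) (fun n => g (n + 1)) := by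
      intro k' m' hm' hk'
      rw [A_shift]
      exact hg k' (m' + 1) (by omega) (by omega)
    have hf' : CMW m₀ (B - 1) f := fun k' m' hm' hk' => hf k' m' hm' (by omega)
    refine add_nonneg ?_ ?_
    · exact ih f (fun n => g n - g (n + 1)) m₀ (B - 1) hf' hDg m hm (by omega)
    · exact ih (fun n => f n - f (n + 1)) (fun n => g (n + 1)) m₀ (B - 1) hDf hgs m hm
        (by omega)

lemma CMW.mul {m₀ B : ℕ} {f g : ℕ → ℝ} (hf : CMW m₀ B f) (hg : CMW m₀ B g) :
    CMW m₀ B (fun n => f n * g n) :=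
  fun k m hm hk => CMW_mul_aux k f g m₀ B hf hg m hm hk

lemma CMW.add {m₀ B : ℕ} {f g : ℕ → ℝ} (hf : CMW m₀ B f) (hg : CMW m₀ B g) :
    CMW m₀ B (fun n => f n + g n) := by
  intro k m hm hk
  rw [A_add]
  exact add_nonneg (hf k m hm hk) (hg k m hm hk)

lemma CMW.smul {m₀ B : ℕ} {f : ℕ → ℝ} {c : ℝ} (hc : 0 ≤ c) (hf : CMW m₀ B f) :
    CMW m₀ B (fun n => c * f n) := by
  intro k m hm hk
  rw [A_mul_left]
  exact mul_nonneg hc (hf k m hm hk)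

lemma CMW.const {m₀ B : ℕ} {c : ℝ} (hc : 0 ≤ c) : CMW m₀ B (fun _ => c) := by
  intro k m hm hk
  match k with
  | 0 => rw [A_zero]; exact hc
  | k + 1 => rw [A_const _ _ _ (by omega)]

lemma CMW.pow {m₀ B : ℕ} {f : ℕ → ℝ} (hf : CMW m₀ B f) (j : ℕ) :
    CMW m₀ B (fun n => f n ^ (j + 1)) := by
  induction j with
  | zero => simpa [pow_one] using hf
  | succ j ih =>
    have : (fun n => f n ^ (j + 1 + 1)) = fun n => f n ^ (j + 1) * f n := by
      funext n; ring
    rw [this]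
    exact ih.mul hf

/-- `1 - s/M` is completely monotone on the window when `s` is positive, completely
alternating on the window and bounded by `M` there. -/
lemma CMW_one_sub_div {s : ℕ → ℝ} {m k : ℕ} {M : ℝ} (hM : 0 < M)
    (hca : ∀ k' m', 1 ≤ k' → m ≤ m' → m' + k' ≤ m + k → A k' m' s ≤ 0)
    (hle : ∀ i, i ≤ k → s (m + i) ≤ M) :
    CMW m (m + k) (fun n => 1 - s n / M) := by
  intro k' m' hm' hk'
  match k' with
  | 0 =>
    rw [A_zero]
    have h1 : s m' ≤ M := by
      have := hle (m' - m) (by omega)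
      have e : m + (m' - m) = m' := by omega
      rwa [e] at this
    have : s m' / M ≤ 1 := by rw [div_le_one hM]; exact h1
    linarith
  | k' + 1 =>
    have e : A (k' + 1) m' (fun n => 1 - s n / M)
        = A (k' + 1) m' (fun _ => (1 : ℝ)) - A (k' + 1) m' (fun n => (1 / M) * s n) := by
      rw [← A_sub]
      exact A_congr fun i _ => by ring
    rw [e, A_const _ _ _ (by omega), A_mul_left]
    have h1 := hca (k' + 1) m' (by omega) hm' (by omega)
    have h2 : (1 / M) * A (k' + 1) m' s ≤ 0 :=
      mul_nonpos_of_nonneg_of_nonpos (by positivity) h1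
    linarith

noncomputable def T (x : ℝ) : ℕ → ℝ
  | 0 => 0
  | j + 1 => (x + T x j ^ 2) / 2

lemma T_tendsto {x : ℝ} (h0 : 0 ≤ x) (h1 : x ≤ 1) :
    Tendsto (fun j => T x j) atTop (𝓝 (1 - Real.sqrt (1 - x))) := by
  set s := Real.sqrt (1 - x) with hs
  have hs0 : 0 ≤ s := Real.sqrt_nonneg _
  have hssq : s ^ 2 = 1 - x := Real.sq_sqrt (by linarith)
  have hs1 : s ≤ 1 := by nlinarith
  set y := 1 - s with hy
  have hy0 : 0 ≤ y := by linarith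
  have hfix : (x + y ^ 2) / 2 = y := by nlinarith
  have hb : ∀ j, 0 ≤ T x j ∧ T x j ≤ y := by
    intro j
    induction j with
    | zero => exact ⟨le_refl 0, hy0⟩
    | succ j ih =>
      constructor
      · show 0 ≤ (x + T x j ^ 2) / 2
        positivity
      · show (x + T x j ^ 2) / 2 ≤ y
        nlinarith [ih.1, ih.2]
  have hmono : Monotone (T x) := by
    apply monotone_nat_of_le_succ
    intro j
    induction j with
    | zero =>
      show T x 0 ≤ (x + T x 0 ^ 2) / 2
      show (0:ℝ) ≤ (x + T x 0 ^ 2) / 2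
      have : T x 0 = 0 := rfl
      rw [this]; positivity
    | succ j ih =>
      show (x + T x j ^ 2) / 2 ≤ (x + T x (j+1) ^ 2) / 2
      have h2 : T x j ^ 2 ≤ T x (j+1) ^ 2 := by
        have := (hb j).1
        nlinarith [ih]
      linarith
  have hbdd : BddAbove (Set.range (T x)) := by
    refine ⟨y, ?_⟩
    rintro z ⟨j, rfl⟩
    exact (hb j).2
  have hconv := tendsto_atTop_ciSup hmono hbdd
  set L := ⨆ j, T x j with hL
  have hTL1 : Tendsto (fun j => T x (j + 1)) atTop (𝓝 L) :=
    hconv.comp (tendsto_add_atTop_nat 1)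
  have hTL2 : Tendsto (fun j => (x + T x j ^ 2) / 2) atTop (𝓝 ((x + L ^ 2) / 2)) := by
    exact (((hconv.pow 2).const_add x).div_const 2)
  have hfixL : (x + L ^ 2) / 2 = L := by
    refine tendsto_nhds_unique ?_ hTL1
    exact hTL2
  have hLy : L ≤ y := ciSup_le fun j => (hb j).2
  have hL0 : 0 ≤ L := le_ciSup hbdd 0
  have hsq : (1 - L) ^ 2 = 1 - x := by nlinarith
  have h1L : s ≤ 1 - L := by linarith
  have : 1 - L = s := by nlinarith
  have hLs : L = 1 - s := by linarith
  rwa [hLs] at hconv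


/-- The square root of a positive sequence with completely alternating squares is
completely alternating. -/
lemma sqrt_CA {v : ℕ → ℝ} (hv : ∀ n, 0 < v n)
    (hca : CompletelyAlternating (fun n => v n ^ 2)) :
    CompletelyAlternating v := by
  intro k hk m
  show A k m v ≤ 0
  set M : ℝ := ∑ i ∈ Finset.range (k + 1), v (m + i) ^ 2 with hM
  have hM0 : 0 < M :=
    Finset.sum_pos (fun i _ => pow_pos (hv _) 2) ⟨0, Finset.mem_range.mpr (by omega)⟩
  have hMle : ∀ i, i ≤ k → v (m + i) ^ 2 ≤ M := fun i hi =>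
    Finset.single_le_sum (f := fun i => v (m + i) ^ 2)
      (fun j _ => (pow_pos (hv _) 2).le) (Finset.mem_range.mpr (by omega))
  set g : ℕ → ℝ := fun n => 1 - v n ^ 2 / M with hg
  have hgCMW : CMW m (m + k) g :=
    CMW_one_sub_div hM0 (fun k' m' h1 _ _ => hca k' h1 m') hMle
  have hgb : ∀ i, i ≤ k → 0 ≤ g (m + i) ∧ g (m + i) ≤ 1 := by
    intro i hi
    have h1 : v (m + i) ^ 2 / M ≤ 1 := (div_le_one hM0).mpr (hMle i hi)
    have h2 : 0 ≤ v (m + i) ^ 2 / M := by positivity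
    constructor
    · show 0 ≤ 1 - v (m + i) ^ 2 / M; linarith
    · show 1 - v (m + i) ^ 2 / M ≤ 1; linarith
  have hHCMW : ∀ j, CMW m (m + k) (fun n => T (g n) j) := by
    intro j
    induction j with
    | zero => exact CMW.const le_rfl
    | succ j ih =>
      have e : (fun n => T (g n) (j + 1))
          = fun n => (1 / 2 : ℝ) * (g n + T (g n) j * T (g n) j) := by
        funext n
        show (g n + T (g n) j ^ 2) / 2 = _
        ring
      rw [e]
      exact CMW.smul (by norm_num) (hgCMW.add (ih.mul ih))
  have hvM : ∀ i, i ≤ k →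
      Tendsto (fun j => Real.sqrt M * (1 - T (g (m + i)) j)) atTop (𝓝 (v (m + i))) := by
    intro i hi
    have h1 := T_tendsto (hgb i hi).1 (hgb i hi).2
    have h2 : Real.sqrt M * (1 - (1 - Real.sqrt (1 - g (m + i)))) = v (m + i) := by
      have e1 : 1 - g (m + i) = v (m + i) ^ 2 / M := by
        show 1 - (1 - v (m + i) ^ 2 / M) = _; ring
      rw [e1, show (1 : ℝ) - (1 - Real.sqrt (v (m + i) ^ 2 / M))
          = Real.sqrt (v (m + i) ^ 2 / M) by ring]
      rw [← Real.sqrt_mul hM0.le, mul_div_cancel₀ _ (ne_of_gt hM0)]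
      exact Real.sqrt_sq (hv _).le
    rw [← h2]
    exact (tendsto_const_nhds.sub h1).const_mul _
  have hAlim : Tendsto (fun j => A k m (fun n => Real.sqrt M * (1 - T (g n) j)))
      atTop (𝓝 (A k m v)) := by
    unfold A
    apply tendsto_finset_sum
    intro i hi
    have hik : i ≤ k := by simpa [Nat.lt_succ_iff] using hi
    exact (hvM i hik).const_mul _
  have hAle : ∀ j, A k m (fun n => Real.sqrt M * (1 - T (g n) j)) ≤ 0 := by
    intro j
    have e1 : A k m (fun n => Real.sqrt M * (1 - T (g n) j))
        = Real.sqrt M * A k m (fun n => 1 - T (g n) j) :=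
      A_mul_left k m _ (fun n => 1 - T (g n) j)
    have e2 : A k m (fun n => 1 - T (g n) j)
        = A k m (fun _ => (1 : ℝ)) - A k m (fun n => T (g n) j) :=
      A_sub k m _ _
    have h3 := hHCMW j k m le_rfl le_rfl
    rw [e1, e2, A_const _ _ _ hk]
    have h4 : 0 ≤ Real.sqrt M := Real.sqrt_nonneg _
    nlinarith
  exact le_of_tendsto hAlim (Filter.Eventually.of_forall hAle)

end CAKey

/-- Let `w₁, …, w_N : ℕ → (0, ∞)` be positive sequences whose squares are completely
alternating, and let `a₁, …, a_N ≥ 0` be not all zero.  Then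
`(log(∑ᵢ aᵢ·wᵢ(n)))ₙ` is completely alternating.  This is the key step showing that a
weighted shift whose weights are a nonnegative linear combination of weight sequences,
each with completely alternating squares, is moment infinitely divisible. -/
theorem log_sum_completely_alternating (N : ℕ) (w : Fin N → ℕ → ℝ)
    (hw : ∀ i n, 0 < w i n)
    (hca : ∀ i : Fin N, CompletelyAlternating (fun n => (w i n) ^ 2))
    (a : Fin N → ℝ) (ha : ∀ i, 0 ≤ a i) (hne : ∃ i, a i ≠ 0) :
    CompletelyAlternating (fun n => Real.log (∑ i, a i * w i n)) := by
  classical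
  open CAKey in
  set S : ℕ → ℝ := fun n => ∑ i, a i * w i n with hSdef
  have hS : ∀ n, 0 < S n := by
    intro n
    obtain ⟨i₀, hi₀⟩ := hne
    refine Finset.sum_pos' (fun i _ => mul_nonneg (ha i) (hw i n).le)
      ⟨i₀, Finset.mem_univ _, ?_⟩
    exact mul_pos ((ha i₀).lt_of_ne (Ne.symm hi₀)) (hw i₀ n)
  have hwCA : ∀ i, CompletelyAlternating (w i) := fun i => CAKey.sqrt_CA (hw i) (hca i)
  have hSCA : ∀ k m, 1 ≤ k → CAKey.A k m S ≤ 0 := by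
    intro k m hk
    have e : CAKey.A k m S = ∑ i : Fin N, a i * CAKey.A k m (w i) := by
      calc CAKey.A k m S
          = ∑ x ∈ Finset.range (k + 1), ∑ i : Fin N,
              a i * ((-1 : ℝ) ^ x * (k.choose x) * w i (m + x)) := by
            refine Finset.sum_congr rfl fun x _ => ?_
            show (-1 : ℝ) ^ x * (k.choose x) * (∑ i : Fin N, a i * w i (m + x)) = _
            rw [Finset.mul_sum]
            exact Finset.sum_congr rfl fun i _ => by ring
        _ = ∑ i : Fin N, ∑ x ∈ Finset.range (k + 1),
              a i * ((-1 : ℝ) ^ x * (k.choose x) * w i (m + x)) := Finset.sum_comm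
        _ = ∑ i : Fin N, a i * CAKey.A k m (w i) := by
            refine Finset.sum_congr rfl fun i _ => ?_
            rw [← Finset.mul_sum]
            rfl
    rw [e]
    exact Finset.sum_nonpos fun i _ =>
      mul_nonpos_of_nonneg_of_nonpos (ha i) (hwCA i k hk m)
  intro k hk m
  show CAKey.A k m (fun n => Real.log (S n)) ≤ 0
  set M : ℝ := ∑ i ∈ Finset.range (k + 1), S (m + i) with hM
  have hM0 : 0 < M :=
    Finset.sum_pos (fun i _ => hS _) ⟨0, Finset.mem_range.mpr (by omega)⟩
  have hMle : ∀ i, i ≤ k → S (m + i) ≤ M := fun i hi =>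
    Finset.single_le_sum (f := fun i => S (m + i)) (fun j _ => (hS _).le)
      (Finset.mem_range.mpr (by omega))
  set g : ℕ → ℝ := fun n => 1 - S n / M with hg
  have hgCMW : CAKey.CMW m (m + k) g :=
    CAKey.CMW_one_sub_div hM0 (fun k' m' h1 _ _ => hSCA k' m' h1) hMle
  have hgb : ∀ i, i ≤ k → 0 ≤ g (m + i) ∧ g (m + i) < 1 := by
    intro i hi
    have h1 : S (m + i) / M ≤ 1 := (div_le_one hM0).mpr (hMle i hi)
    have h2 : 0 < S (m + i) / M := div_pos (hS _) hM0
    constructor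
    · show 0 ≤ 1 - S (m + i) / M; linarith
    · show 1 - S (m + i) / M < 1; linarith
  have habs : ∀ i, i ≤ k → |g (m + i)| < 1 := fun i hi =>
    abs_lt.mpr ⟨by linarith [(hgb i hi).1], (hgb i hi).2⟩
  have hsummable : ∀ i, i ≤ k →
      Summable (fun j : ℕ => g (m + i) ^ (j + 1) / ((j : ℝ) + 1)) := by
    intro i hi
    have := (Real.hasSum_pow_div_log_of_abs_lt_one (habs i hi)).summable
    exact_mod_cast this
  have hlog : ∀ i, i ≤ k →
      Real.log (S (m + i)) = Real.log M - ∑' j : ℕ, g (m + i) ^ (j + 1) / ((j : ℝ) + 1) := by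
    intro i hi
    have h1 := (Real.hasSum_pow_div_log_of_abs_lt_one (habs i hi)).tsum_eq
    have h2 : (1 : ℝ) - g (m + i) = S (m + i) / M := by
      show (1 : ℝ) - (1 - S (m + i) / M) = _; ring
    have h3 : (∑' j : ℕ, g (m + i) ^ (j + 1) / ((j : ℝ) + 1))
        = -Real.log (1 - g (m + i)) := by
      rw [← h1]
    rw [h3, h2, Real.log_div (ne_of_gt (hS _)) (ne_of_gt hM0)]
    ring
  calc CAKey.A k m (fun n => Real.log (S n))
      = CAKey.A k m (fun n => Real.log M - ∑' j : ℕ, g n ^ (j + 1) / ((j : ℝ) + 1)) :=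
        CAKey.A_congr fun i hi => hlog i hi
    _ = CAKey.A k m (fun _ => Real.log M)
        - CAKey.A k m (fun n => ∑' j : ℕ, g n ^ (j + 1) / ((j : ℝ) + 1)) :=
        CAKey.A_sub k m _ _
    _ = -CAKey.A k m (fun n => ∑' j : ℕ, g n ^ (j + 1) / ((j : ℝ) + 1)) := by
        rw [CAKey.A_const _ _ _ hk]; ring
    _ ≤ 0 := by
        have key : CAKey.A k m (fun n => ∑' j : ℕ, g n ^ (j + 1) / ((j : ℝ) + 1))
            = ∑' j : ℕ, CAKey.A k m (fun n => g n ^ (j + 1) / ((j : ℝ) + 1)) := by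
          unfold CAKey.A
          have e3 : ∀ x ∈ Finset.range (k + 1),
              (-1 : ℝ) ^ x * (k.choose x) * (∑' j : ℕ, g (m + x) ^ (j + 1) / ((j : ℝ) + 1))
              = ∑' j : ℕ, (-1 : ℝ) ^ x * (k.choose x) * (g (m + x) ^ (j + 1) / ((j : ℝ) + 1)) :=
            fun x hx => (tsum_mul_left).symm
          rw [Finset.sum_congr rfl e3]
          exact (Summable.tsum_finsetSum fun x hx =>
            ((hsummable x (by simpa [Nat.lt_succ_iff] using hx)).mul_left _)).symm
        have hA : 0 ≤ CAKey.A k m (fun n => ∑' j : ℕ, g n ^ (j + 1) / ((j : ℝ) + 1)) := by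
          rw [key]
          refine tsum_nonneg fun j => ?_
          have e4 : CAKey.A k m (fun n => g n ^ (j + 1) / ((j : ℝ) + 1))
              = (1 / ((j : ℝ) + 1)) * CAKey.A k m (fun n => g n ^ (j + 1)) := by
            rw [← CAKey.A_mul_left k m (1 / ((j : ℝ) + 1)) (fun n => g n ^ (j + 1))]
            exact CAKey.A_congr fun i _ => by ring
          rw [e4]
          exact mul_nonneg (by positivity) (hgCMW.pow j k m le_rfl le_rfl)
        linarith
end

section
/- Let α, β, t, d, i be integers with 1 ≤ α < β, t ≥ 0, d ≥ 1, and 0 ≤ i ≤ d − 1. For n ∈ ℕ define Wₙ = (dn + i + t + α + d)²(dn + i + t + β + d)² / [(dn + i + α + d)(dn + i + α)(dn + i + β + d)(dn + i + β)]. Then Wₙ > 1 for every n, and Wₙ₊₁ < Wₙ for every n. (Wₙ is the square of the n-th weight of the shift on the orbit with founder i in the direct sum decomposition of the Toeplitz operator T_{z^{t+d} z̄^t} on the generalized derivative Hardy space S²_{α,β}(𝔻}; hence T_{z^{t+d} z̄^t} is expansive and not hyponormal, and its adjoint, a direct sum of backward shifts, is not hyponormal either.) -/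
/-- Monotonicity of `s ↦ (s+u)^2 / (s*(s+d))`. -/
lemma aux_f_mono (s s' d u : ℝ) (hs : 0 < s) (hss : s < s') (hd : 0 < d) (hu : d ≤ u) :
    (s' + u) ^ 2 / (s' * (s' + d)) < (s + u) ^ 2 / (s * (s + d)) := by
  have hs' : 0 < s' := hs.trans hss
  rw [div_lt_div_iff₀ (by positivity) (by positivity)]
  have he : 0 < s' - s := by linarith
  have hA : 0 ≤ 2 * s * u + u ^ 2 - s * d := by nlinarith
  have hu0 : 0 < u := lt_of_lt_of_le hd hu
  have hB : 0 < s ^ 2 * (2 * u - d) + 2 * s * u ^ 2 + u ^ 2 * d := by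
    nlinarith [mul_pos (mul_pos hs hs) (show (0:ℝ) < 2 * u - d by linarith),
      mul_pos hs (mul_pos hu0 hu0), mul_pos (mul_pos hu0 hu0) hd]
  nlinarith [mul_pos he hB, mul_nonneg (mul_nonneg he.le he.le) hA]

/-- `(s+u)^2/(s*(s+d)) > 1`. -/
lemma aux_f_gt_one (s d u : ℝ) (hs : 0 < s) (hd : 0 < d) (hu : d ≤ u) :
    1 < (s + u) ^ 2 / (s * (s + d)) := by
  rw [lt_div_iff₀ (by positivity)]
  nlinarith

lemma aux_split (a b u d : ℝ) (ha : 0 < a) (hb : 0 < b) (hd : 0 < d) :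
    ((a + u) ^ 2 * (b + u) ^ 2) / ((a + d) * a * (b + d) * b) =
      ((a + u) ^ 2 / (a * (a + d))) * ((b + u) ^ 2 / (b * (b + d))) := by
  rw [div_mul_div_comm]
  ring

/-- Let `α, β, t, d, i` be integers with `1 ≤ α < β`, `t ≥ 0`, `d ≥ 1`, `0 ≤ i ≤ d − 1`,
and for `n ∈ ℕ` set
`Wₙ = (dn+i+t+α+d)²(dn+i+t+β+d)² / [(dn+i+α+d)(dn+i+α)(dn+i+β+d)(dn+i+β)]`.
Then `Wₙ > 1` and `Wₙ₊₁ < Wₙ` for every `n`.  `Wₙ` is the squared `n`-th weight of the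
shift on the orbit with founder `i` in the decomposition of `T_{z^{t+d} z̄ᵗ}` on the
generalized derivative Hardy space `S²_{α,β}(𝔻)`; hence `T_{z^{t+d} z̄ᵗ}` is expansive
and not hyponormal, and its adjoint is not hyponormal either. -/
theorem derivative_hardy_weights_expansive_decreasing
    (α β t d i : ℤ) (hα : 1 ≤ α) (hαβ : α < β) (ht : 0 ≤ t) (hd : 1 ≤ d)
    (hi₀ : 0 ≤ i) (hi₁ : i ≤ d - 1) :
    (∀ n : ℕ,
      1 < (((d : ℝ) * n + i + t + α + d) ^ 2 * ((d : ℝ) * n + i + t + β + d) ^ 2) /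
          (((d : ℝ) * n + i + α + d) * ((d : ℝ) * n + i + α) *
            ((d : ℝ) * n + i + β + d) * ((d : ℝ) * n + i + β))) ∧
    (∀ n : ℕ,
      (((d : ℝ) * (n + 1) + i + t + α + d) ^ 2 * ((d : ℝ) * (n + 1) + i + t + β + d) ^ 2) /
          (((d : ℝ) * (n + 1) + i + α + d) * ((d : ℝ) * (n + 1) + i + α) *
            ((d : ℝ) * (n + 1) + i + β + d) * ((d : ℝ) * (n + 1) + i + β)) <
        (((d : ℝ) * n + i + t + α + d) ^ 2 * ((d : ℝ) * n + i + t + β + d) ^ 2) /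
          (((d : ℝ) * n + i + α + d) * ((d : ℝ) * n + i + α) *
            ((d : ℝ) * n + i + β + d) * ((d : ℝ) * n + i + β))) := by
  -- real versions of the hypotheses
  have hαR : (1 : ℝ) ≤ (α : ℝ) := by exact_mod_cast hα
  have hαβR : (α : ℝ) < (β : ℝ) := by exact_mod_cast hαβ
  have htR : (0 : ℝ) ≤ (t : ℝ) := by exact_mod_cast ht
  have hdR : (1 : ℝ) ≤ (d : ℝ) := by exact_mod_cast hd
  have hiR : (0 : ℝ) ≤ (i : ℝ) := by exact_mod_cast hi₀
  have hdpos : (0 : ℝ) < (d : ℝ) := by linarith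
  -- general facts about W at an arbitrary nonnegative real x
  have key : ∀ x : ℝ, 0 ≤ x →
      1 < ((x + t + α + d) ^ 2 * (x + t + β + d) ^ 2) /
          ((x + α + d) * (x + α) * (x + β + d) * (x + β)) ∧
      ((x + d + t + α + d) ^ 2 * (x + d + t + β + d) ^ 2) /
          ((x + d + α + d) * (x + d + α) * (x + d + β + d) * (x + d + β)) <
        ((x + t + α + d) ^ 2 * (x + t + β + d) ^ 2) /
          ((x + α + d) * (x + α) * (x + β + d) * (x + β)) := by
    intro x hx
    set a : ℝ := x + α with ha_def
    set b : ℝ := x + β with hb_def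
    set u : ℝ := t + d with hu_def
    have ha : 0 < a := by simp only [ha_def]; linarith
    have hb : 0 < b := by simp only [hb_def]; linarith
    have hu : (d : ℝ) ≤ u := by simp only [hu_def]; linarith
    have e1 : ((x + t + α + d) ^ 2 * (x + t + β + d) ^ 2) /
          ((x + α + d) * (x + α) * (x + β + d) * (x + β)) =
        ((a + u) ^ 2 / (a * (a + d))) * ((b + u) ^ 2 / (b * (b + d))) := by
      rw [show x + t + α + (d:ℝ) = a + u by rw [ha_def, hu_def]; ring,
        show x + t + β + (d:ℝ) = b + u by rw [hb_def, hu_def]; ring,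
        show x + α + (d:ℝ) = a + d by rw [ha_def],
        show x + β + (d:ℝ) = b + d by rw [hb_def],
        show x + (α:ℝ) = a by rw [ha_def], show x + (β:ℝ) = b by rw [hb_def]]
      exact aux_split a b u d ha hb hdpos
    have e2 : ((x + d + t + α + d) ^ 2 * (x + d + t + β + d) ^ 2) /
          ((x + d + α + d) * (x + d + α) * (x + d + β + d) * (x + d + β)) =
        (((a + d) + u) ^ 2 / ((a + d) * ((a + d) + d))) *
          (((b + d) + u) ^ 2 / ((b + d) * ((b + d) + d))) := by
      rw [show x + d + t + α + (d:ℝ) = (a + d) + u by rw [ha_def, hu_def]; ring,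
        show x + d + t + β + (d:ℝ) = (b + d) + u by rw [hb_def, hu_def]; ring,
        show x + d + α + (d:ℝ) = (a + d) + d by rw [ha_def]; ring,
        show x + d + β + (d:ℝ) = (b + d) + d by rw [hb_def]; ring,
        show x + d + (α:ℝ) = a + d by rw [ha_def]; ring,
        show x + d + (β:ℝ) = b + d by rw [hb_def]; ring]
      exact aux_split (a + d) (b + d) u d (by linarith) (by linarith) hdpos
    have hfa1 : 1 < (a + u) ^ 2 / (a * (a + d)) := aux_f_gt_one a d u ha hdpos hu
    have hfb1 : 1 < (b + u) ^ 2 / (b * (b + d)) := aux_f_gt_one b d u hb hdpos hu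
    constructor
    · rw [e1]
      nlinarith
    · rw [e1, e2]
      have m1 := aux_f_mono a (a + d) d u ha (by linarith) hdpos hu
      have m2 := aux_f_mono b (b + d) d u hb (by linarith) hdpos hu
      have p1 : 0 < ((a + d) + u) ^ 2 / ((a + d) * ((a + d) + d)) := by positivity
      have p2 : 0 < ((b + d) + u) ^ 2 / ((b + d) * ((b + d) + d)) := by positivity
      nlinarith
  constructor
  · intro n
    have hx : (0 : ℝ) ≤ (d : ℝ) * n + i := by positivity
    exact (key ((d : ℝ) * n + i) hx).1
  · intro n
    have hx : (0 : ℝ) ≤ (d : ℝ) * n + i := by positivity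
    have h := (key ((d : ℝ) * n + i) hx).2
    have hrw : (d : ℝ) * (n + 1) + i = (d : ℝ) * n + i + d := by ring
    rw [hrw]
    convert h using 3 <;> ring
end

section
/- Let p > 1 be real, let N be real with −1 < N ≤ 0, and let D ≥ 1 be real. Define γ₀ = 1 and γₙ = ∏_{i=0}^{n−1} (pⁱ + N)/(pⁱ + D) for n ≥ 1 (each factor is positive and at most 1). Then there exists a probability measure μ supported in [0,1] such that γₙ = ∫ tⁿ dμ(t) for all n ∈ ℕ. (That is, the geometrically regular weighted shift with weights αₙ = √((pⁿ + N)/(pⁿ + D)) is subnormal for parameters lying 'above Sector III' of the magic square, i.e., D ≥ 1 and −1 < N ≤ 0.) -/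
/-!
With `q = p⁻¹ ∈ (0, 1)`, the measure is atomic, with atoms `qᵏ` and weights proportional to
the positive coefficients `cₖ` of a power series `F(z) = ∑ cₖ zᵏ` satisfying the functional
equation `(1 + N z) F(z) = (1 + D z) F(q z)`. Its `n`-th moment is `F(qⁿ) / F(1)`, and
iterating the functional equation gives `F(qⁿ) = F(1) ∏_{i<n} (1 + N qⁱ) / (1 + D qⁱ) = F(1) γₙ`.
The coefficients are summable by the ratio test, the ratio `c_{k+1} / cₖ` tending to `-N < 1`.
-/

open MeasureTheory Filter Topology

theorem exists_probabilityMeasure_Icc_moments_eq_tsum {w x : ℕ → ℝ} (hw : ∀ k, 0 ≤ w k)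
    (hw1 : HasSum w 1) (hx : ∀ k, x k ∈ Set.Icc (0 : ℝ) 1) :
    ∃ μ : Measure ℝ, IsProbabilityMeasure μ ∧ μ (Set.Icc (0 : ℝ) 1)ᶜ = 0 ∧
      ∀ n : ℕ, ∫ t, t ^ n ∂μ = ∑' k, w k * x k ^ n := by
  have hν : HasSum (fun k => ENNReal.ofReal (w k)) 1 := by
    rw [ENNReal.summable.hasSum_iff, ← ENNReal.ofReal_tsum_of_nonneg hw hw1.summable,
      hw1.tsum_eq, ENNReal.ofReal_one]
  let ν : PMF ℕ := ⟨_, hν⟩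
  have hxm : Measurable x := measurable_of_countable x
  refine ⟨ν.toMeasure.map x, Measure.isProbabilityMeasure_map hxm.aemeasurable, ?_,
    fun n => ?_⟩
  · rw [Measure.map_apply hxm measurableSet_Icc.compl, Set.preimage_eq_empty, measure_empty]
    exact Set.disjoint_compl_left_iff_subset.2 (Set.range_subset_iff.2 hx)
  · have hbdd (k : ℕ) : ‖x k ^ n‖ ≤ 1 := by
      rw [norm_pow, Real.norm_of_nonneg (hx k).1]
      exact pow_le_one₀ (hx k).1 (hx k).2
    rw [integral_map hxm.aemeasurable (continuous_pow n).aestronglyMeasurable,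
      ν.integral_eq_tsum _ (.of_bound .of_discrete 1 (.of_forall hbdd))]
    congr with k
    exact congrArg (· * _) (ENNReal.toReal_ofReal (hw k))

namespace GRWS

/-- Comparing coefficients of `zᵏ⁺¹` in `(1 + N z) F(z) = (1 + D z) F(q z)` gives this
recursion. -/
noncomputable def coeff (N D q : ℝ) : ℕ → ℝ
  | 0 => 1
  | k + 1 => coeff N D q k * ((D * q ^ k - N) / (1 - q ^ (k + 1)))

noncomputable def series (N D q z : ℝ) : ℝ := ∑' k, coeff N D q k * z ^ k

variable {N D q : ℝ}

theorem series_one : series N D q 1 = ∑' k, coeff N D q k := by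
  simp [series]

theorem coeff_succ_mul (hq0 : 0 ≤ q) (hq1 : q < 1) (k : ℕ) :
    coeff N D q (k + 1) * (1 - q ^ (k + 1)) = coeff N D q k * (D * q ^ k - N) := by
  have : 1 - q ^ (k + 1) ≠ 0 := (sub_pos.2 (pow_lt_one₀ hq0 hq1 k.succ_ne_zero)).ne'
  rw [coeff]
  field_simp

theorem coeff_pos (hq0 : 0 < q) (hq1 : q < 1) (hN : N ≤ 0) (hD : 0 < D) :
    ∀ k, 0 < coeff N D q k
  | 0 => one_pos
  | k + 1 => by
    have hnum : 0 < D * q ^ k - N := by nlinarith [pow_pos hq0 k]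
    have hden : 0 < 1 - q ^ (k + 1) := sub_pos.2 (pow_lt_one₀ hq0.le hq1 k.succ_ne_zero)
    exact mul_pos (coeff_pos hq0 hq1 hN hD k) (div_pos hnum hden)

theorem summable_coeff (hq0 : 0 < q) (hq1 : q < 1) (hN₁ : -1 < N) (hN₂ : N ≤ 0)
    (hD : 0 < D) : Summable (coeff N D q) := by
  have hpos := coeff_pos hq0 hq1 hN₂ hD
  have hlim : ‖-N‖ < 1 := by
    rw [norm_neg, Real.norm_of_nonpos hN₂]
    linarith
  have hq : Tendsto (q ^ ·) atTop (𝓝 0) := tendsto_pow_atTop_nhds_zero_of_lt_one hq0.le hq1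
  have hratio : Tendsto (fun k : ℕ => (D * q ^ k - N) / (1 - q ^ (k + 1))) atTop (𝓝 (-N)) := by
    have h := ((hq.const_mul D).sub_const N).div
      ((tendsto_const_nhds (x := (1 : ℝ))).sub (hq.comp (tendsto_add_atTop_nat 1))) (by norm_num)
    rw [mul_zero, zero_sub, sub_zero, div_one] at h
    exact h
  refine summable_of_ratio_test_tendsto_lt_one hlim (.of_forall fun k => (hpos k).ne')
    (hratio.norm.congr fun k => ?_)
  rw [coeff, norm_mul, mul_div_cancel_left₀ _ (norm_ne_zero_iff.2 (hpos k).ne')]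

theorem summable_coeff_mul_pow (hq0 : 0 < q) (hq1 : q < 1) (hN₁ : -1 < N) (hN₂ : N ≤ 0)
    (hD : 0 < D) {z : ℝ} (hz0 : 0 ≤ z) (hz1 : z ≤ 1) :
    Summable (fun k => coeff N D q k * z ^ k) :=
  (summable_coeff hq0 hq1 hN₁ hN₂ hD).of_nonneg_of_le
    (fun k => mul_nonneg (coeff_pos hq0 hq1 hN₂ hD k).le (pow_nonneg hz0 k))
    (fun k => mul_le_of_le_one_right (coeff_pos hq0 hq1 hN₂ hD k).le (pow_le_one₀ hz0 hz1))

theorem series_functional_equation (hq0 : 0 ≤ q) (hq1 : q < 1) {z : ℝ}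
    (hz : Summable (fun k => coeff N D q k * z ^ k))
    (hqz : Summable (fun k => coeff N D q k * (q * z) ^ k)) :
    (1 + N * z) * series N D q z = (1 + D * z) * series N D q (q * z) := by
  have hdiff : Summable (fun k => coeff N D q k * z ^ k - coeff N D q k * (q * z) ^ k) :=
    hz.sub hqz
  have hshift : series N D q z - series N D q (q * z)
      = z * (D * series N D q (q * z) - N * series N D q z) :=
    calc series N D q z - series N D q (q * z)
        = ∑' k, (coeff N D q k * z ^ k - coeff N D q k * (q * z) ^ k) :=
          (hz.tsum_sub hqz).symm
      _ = ∑' k, (coeff N D q (k + 1) * z ^ (k + 1)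
            - coeff N D q (k + 1) * (q * z) ^ (k + 1)) := by
          rw [hdiff.tsum_eq_zero_add]
          simp
      _ = ∑' k, z * (D * (coeff N D q k * (q * z) ^ k) - N * (coeff N D q k * z ^ k)) := by
          congr with k
          linear_combination z ^ (k + 1) * coeff_succ_mul (N := N) (D := D) hq0 hq1 k
      _ = z * (D * series N D q (q * z) - N * series N D q z) := by
          rw [tsum_mul_left, (hqz.mul_left D).tsum_sub (hz.mul_left N), tsum_mul_left,
            tsum_mul_left]
          rfl
  linear_combination hshift

theorem series_pow_eq_prod (hq0 : 0 < q) (hq1 : q < 1) (hN₁ : -1 < N) (hN₂ : N ≤ 0)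
    (hD : 0 < D) (n : ℕ) :
    series N D q (q ^ n)
      = series N D q 1 * ∏ i ∈ Finset.range n, (1 + N * q ^ i) / (1 + D * q ^ i) := by
  induction n with
  | zero => simp
  | succ n ih =>
    have hsum (m : ℕ) := summable_coeff_mul_pow hq0 hq1 hN₁ hN₂ hD (pow_nonneg hq0.le m)
      (pow_le_one₀ hq0.le hq1.le (n := m))
    have hfe := series_functional_equation hq0.le hq1 (hsum n) (pow_succ' q n ▸ hsum (n + 1))
    have : 0 < 1 + D * q ^ n := by positivity
    rw [Finset.prod_range_succ, ← mul_assoc, ← ih, pow_succ']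
    field_simp
    linear_combination -hfe

end GRWS

/-- Let `p > 1`, `−1 < N ≤ 0`, `D ≥ 1`.  Then the moments
`γₙ = ∏_{i=0}^{n−1} (pⁱ + N)/(pⁱ + D)` come from a probability measure supported in
`[0,1]`.  That is, the geometrically regular weighted shift with weights
`αₙ = √((pⁿ + N)/(pⁿ + D))` is subnormal for parameters 'above Sector III' of the magic
square. -/
theorem grws_above_sector_III_subnormal (p N D : ℝ) (hp : 1 < p)
    (hN₁ : -1 < N) (hN₂ : N ≤ 0) (hD : 1 ≤ D) :
    ∃ μ : Measure ℝ, IsProbabilityMeasure μ ∧ μ (Set.Icc (0 : ℝ) 1)ᶜ = 0 ∧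
      ∀ n : ℕ, ∫ t, t ^ n ∂μ =
        ∏ i ∈ Finset.range n, (p ^ i + N) / (p ^ i + D) := by
  have hp0 : 0 < p := one_pos.trans hp
  have hq0 : 0 < p⁻¹ := inv_pos.2 hp0
  have hq1 : p⁻¹ < 1 := inv_lt_one_of_one_lt₀ hp
  have hD0 : 0 < D := one_pos.trans_le hD
  have hg := GRWS.summable_coeff hq0 hq1 hN₁ hN₂ hD0
  have hpos := GRWS.coeff_pos hq0 hq1 hN₂ hD0
  set S := ∑' k, GRWS.coeff N D p⁻¹ k
  have hS : 0 < S := hg.tsum_pos (fun k => (hpos k).le) 0 (hpos 0)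
  obtain ⟨μ, hμ, hsupp, hmom⟩ := exists_probabilityMeasure_Icc_moments_eq_tsum
    (w := fun k => GRWS.coeff N D p⁻¹ k / S) (x := (p⁻¹ ^ ·))
    (fun k => div_nonneg (hpos k).le hS.le) (div_self hS.ne' ▸ hg.hasSum.div_const S)
    (fun k => ⟨pow_nonneg hq0.le k, pow_le_one₀ hq0.le hq1.le⟩)
  refine ⟨μ, hμ, hsupp, fun n => ?_⟩
  have hfactor (i : ℕ) :
      (1 + N * p⁻¹ ^ i) / (1 + D * p⁻¹ ^ i) = (p ^ i + N) / (p ^ i + D) := by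
    have : 0 < p ^ i := pow_pos hp0 i
    rw [inv_pow]
    field_simp
  calc ∫ t, t ^ n ∂μ = GRWS.series N D p⁻¹ (p⁻¹ ^ n) / S := by
        simp_rw [hmom, GRWS.series, ← pow_mul, mul_comm _ n, pow_mul, div_mul_eq_mul_div,
          tsum_div_const]
    _ = ∏ i ∈ Finset.range n, (p ^ i + N) / (p ^ i + D) := by
        rw [GRWS.series_pow_eq_prod hq0 hq1 hN₁ hN₂ hD0, GRWS.series_one,
          mul_div_cancel_left₀ _ hS.ne']
        exact Finset.prod_congr rfl fun i _ => hfactor i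
end

section
/- Let p > 1 be real, N > 0 real, and k ≥ 0 an integer; set D = pᵏ·N. Define γ₀ = 1 and γₙ = ∏_{i=0}^{n−1} (pⁱ + N)/(pⁱ + pᵏN) for n ≥ 1. Then there exists a probability measure μ supported in [0,1] such that γₙ = ∫ tⁿ dμ(t) for all n ∈ ℕ; moreover μ can be taken finitely atomic. (That is, the geometrically regular weighted shift with weights αₙ = √((pⁿ + N)/(pⁿ + pᵏN)) on the special line D = pᵏN — including the extension of this line outside the magic square, i.e., for N ≥ 1 — is subnormal with finitely atomic Berger measure.) -/
/-!
Let `c = pᵏN`. Multiplying numerator and denominator of `(pⁱ + N)/(pⁱ + c)` by `pᵏ` and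
telescoping `∏_{i < n+k} (pⁱ + c)` in two ways turns the `n`-fold product `γₙ` into the `k`-fold
product `γₙ = ∏_{j<k} (aⱼ + bⱼ p⁻ⁿ)` with `aⱼ = pʲ/(pʲ + c)` and `bⱼ = c/(pʲ + c)`, which are
nonnegative and sum to `1`. So `γₙ = E[(p⁻ⁿ)^S]`, where `S` counts the successes of independent
trials with success probabilities `bⱼ`: the Berger measure is the law of `p^{-S}`, which has at
most `k + 1` atoms in `[0, 1]`.
-/

open MeasureTheory Finset
open scoped ENNReal

section FinitelyAtomic

variable {ι α : Type*} [MeasurableSpace α]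

theorem exists_finsetSum_smul_dirac_eq (s : Finset ι) (c : ι → ℝ≥0∞) (x : ι → α) :
    ∃ (F : Finset α) (d : α → ℝ≥0∞),
      ∑ i ∈ s, c i • Measure.dirac (x i) = ∑ y ∈ F, d y • Measure.dirac y := by
  classical
  refine ⟨s.image x, fun y => ∑ i ∈ s with x i = y, c i, ?_⟩
  rw [← sum_fiberwise_of_maps_to fun i hi => mem_image_of_mem x hi]
  refine sum_congr rfl fun y _ => ?_
  rw [sum_smul]
  exact sum_congr rfl fun i hi => by rw [(mem_filter.1 hi).2]

theorem finsetSum_ofReal_smul_dirac_univ {s : Finset ι} {w : ι → ℝ} (hw : ∀ i ∈ s, 0 ≤ w i)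
    (x : ι → α) :
    (∑ i ∈ s, ENNReal.ofReal (w i) • Measure.dirac (x i)) Set.univ
      = ENNReal.ofReal (∑ i ∈ s, w i) := by
  simp [Measure.finsetSum_apply, ENNReal.ofReal_sum_of_nonneg hw]

variable [MeasurableSingletonClass α]

theorem finsetSum_smul_dirac_apply_eq_zero {s : Finset ι} (c : ι → ℝ≥0∞) {x : ι → α}
    {S : Set α} (hx : ∀ i ∈ s, x i ∉ S) : (∑ i ∈ s, c i • Measure.dirac (x i)) S = 0 := by
  rw [Measure.finsetSum_apply]
  exact sum_eq_zero fun i hi => by simp [Measure.dirac_apply, hx i hi]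

theorem integral_finsetSum_ofReal_smul_dirac {s : Finset ι} {w : ι → ℝ}
    (hw : ∀ i ∈ s, 0 ≤ w i) (x : ι → α) (f : α → ℝ) :
    ∫ t, f t ∂(∑ i ∈ s, ENNReal.ofReal (w i) • Measure.dirac (x i))
      = ∑ i ∈ s, w i * f (x i) := by
  rw [integral_finsetSum_measure fun i _ =>
    (integrable_dirac enorm_lt_top).smul_measure ENNReal.ofReal_ne_top]
  refine sum_congr rfl fun i hi => ?_
  rw [integral_smul_measure, integral_dirac, ENNReal.toReal_ofReal (hw i hi), smul_eq_mul]

end FinitelyAtomic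

theorem sum_powerset_prod_mul_prod_sdiff_mul_pow_card {ι R : Type*} [DecidableEq ι]
    [CommSemiring R] (s : Finset ι) (a b : ι → R) (x : R) :
    ∑ t ∈ s.powerset, (∏ i ∈ t, b i) * (∏ i ∈ s \ t, a i) * x ^ #t
      = ∏ i ∈ s, (b i * x + a i) := by
  rw [prod_add]
  refine sum_congr rfl fun t _ => ?_
  rw [prod_mul_distrib, prod_const]
  ring

/-- The moment `γₙ` of the geometrically regular weighted shift with parameters `p`, `(N, D)`. -/
noncomputable def grwsMoment (p N D : ℝ) (n : ℕ) : ℝ :=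
  ∏ i ∈ range n, (p ^ i + N) / (p ^ i + D)

theorem grwsMoment_special_line {p N : ℝ} (hp : 0 < p) (hN : 0 ≤ N) (k n : ℕ) :
    grwsMoment p N (p ^ k * N) n
      = ∏ j ∈ range k, (p ^ j + p ^ k * N * p⁻¹ ^ n) / (p ^ j + p ^ k * N) := by
  set f : ℕ → ℝ := fun i => p ^ i + p ^ k * N with hf
  have hf_pos (i : ℕ) : 0 < f i := by positivity
  have shift (m i : ℕ) : p ^ i + p ^ k * N * p⁻¹ ^ m = p⁻¹ ^ m * f (m + i) := by
    simp only [hf, pow_add, inv_pow]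
    field_simp
  have shift_k (i : ℕ) : p ^ i + N = p⁻¹ ^ k * f (k + i) := by
    rw [← shift, inv_pow, mul_comm (p ^ k), mul_inv_cancel_right₀ (pow_ne_zero k hp.ne')]
  have telescope : (∏ i ∈ range n, f i) * ∏ j ∈ range k, f (n + j)
      = (∏ j ∈ range k, f j) * ∏ i ∈ range n, f (k + i) := by
    rw [← prod_range_add, ← prod_range_add, add_comm]
  simp only [grwsMoment, shift_k, shift, prod_div_distrib, prod_mul_distrib, prod_const,
    card_range]
  rw [div_eq_div_iff (prod_pos fun i _ => hf_pos i).ne' (prod_pos fun j _ => hf_pos j).ne',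
    ← pow_mul, ← pow_mul, mul_comm k n]
  linear_combination (p⁻¹ ^ (n * k)) * telescope.symm

/-- Let `p > 1`, `N > 0`, `k ≥ 0`, and `D = pᵏN`.  Then the moments
`γₙ = ∏_{i=0}^{n−1} (pⁱ + N)/(pⁱ + pᵏN)` come from a probability measure supported in
`[0,1]` which can be taken finitely atomic (a finite nonnegative combination of Dirac
point masses).  That is, the geometrically regular weighted shift on the special line
`D = pᵏN` — including its extension outside the magic square — is subnormal with finitely
atomic Berger measure. -/
theorem grws_special_line_subnormal_finitely_atomic (p N : ℝ) (k : ℕ)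
    (hp : 1 < p) (hN : 0 < N) :
    ∃ μ : Measure ℝ, IsProbabilityMeasure μ ∧ μ (Set.Icc (0 : ℝ) 1)ᶜ = 0 ∧
      (∀ n : ℕ, ∫ t, t ^ n ∂μ =
        ∏ i ∈ Finset.range n, (p ^ i + N) / (p ^ i + p ^ k * N)) ∧
      ∃ (F : Finset ℝ) (c : ℝ → ℝ≥0∞),
        μ = ∑ x ∈ F, c x • Measure.dirac x := by
  set a : ℕ → ℝ := fun j => p ^ j / (p ^ j + p ^ k * N)
  set b : ℕ → ℝ := fun j => p ^ k * N / (p ^ j + p ^ k * N)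
  set w : Finset ℕ → ℝ := fun t => (∏ j ∈ t, b j) * ∏ j ∈ range k \ t, a j
  have hp₀ : 0 < p := zero_lt_one.trans hp
  have hw : ∀ t ∈ (range k).powerset, 0 ≤ w t := fun t _ => by positivity
  have hmoment (n : ℕ) :
      ∑ t ∈ (range k).powerset, w t * (p⁻¹ ^ #t) ^ n = grwsMoment p N (p ^ k * N) n := by
    rw [grwsMoment_special_line hp₀ hN.le]
    calc _ = ∏ j ∈ range k, (b j * p⁻¹ ^ n + a j) := by
          simp_rw [pow_right_comm _ _ n]
          exact sum_powerset_prod_mul_prod_sdiff_mul_pow_card _ _ _ _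
      _ = _ := prod_congr rfl fun j _ => by ring
  refine ⟨∑ t ∈ (range k).powerset, ENNReal.ofReal (w t) • Measure.dirac (p⁻¹ ^ #t), ⟨?_⟩,
    finsetSum_smul_dirac_apply_eq_zero _ fun t _ h => h ⟨by positivity, ?_⟩, fun n => ?_,
    exists_finsetSum_smul_dirac_eq _ _ _⟩
  · rw [finsetSum_ofReal_smul_dirac_univ hw, ← ENNReal.ofReal_one]
    simpa [grwsMoment] using congrArg ENNReal.ofReal (hmoment 0)
  · exact pow_le_one₀ (by positivity) (inv_le_one_of_one_le₀ hp.le)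
  · rw [integral_finsetSum_ofReal_smul_dirac hw]
    exact hmoment n
end
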